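/- arXiv:1106.4611 — 10 statements merged into one kernel-verified Lean document; each statement's English description precedes it below -/
import Mathlib

section
/- Let Z and X be metric spaces, n a natural number, and let μ denote the n-dimensional Hausdorff measure on each space. Suppose f : Z → X is a surjective 1-Lipschitz map (i.e. dist(f(a), f(b)) ≤ dist(a, b) for all a, b ∈ Z) and μ(Z) = μ(X) < ∞. Then for every Borel measurable set A ⊆ Z one has μ(f(A)) = μ(A), and for every Borel measurable set B ⊆ X one has μ(f⁻¹(B)) = μ(B). -/
/-!
If `ν (f '' s) ≤ μ s` for every `s` and `f` is onto, then for measurable `A` the images `f '' A`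
and `f '' Aᶜ` cover the target, so
`μ A + μ Aᶜ = μ univ = ν univ ≤ ν (f '' A) + ν (f '' Aᶜ) ≤ ν (f '' A) + μ Aᶜ`;
cancelling the finite term `μ Aᶜ` gives `μ A ≤ ν (f '' A)`. A 1-Lipschitz map does not increase
Hausdorff measure, and preimages reduce to images since `f '' (f ⁻¹' B) = B`.
-/

open MeasureTheory Set

section MeasureImage

variable {Z X : Type*} [MeasurableSpace Z] [MeasurableSpace X] {f : Z → X}
  {μ : Measure Z} {ν : Measure X}

theorem measure_image_eq_of_surjective_of_measure_image_le (hf : f.Surjective)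
    (hle : ∀ s, ν (f '' s) ≤ μ s) (huniv : μ univ = ν univ) (hfin : ν univ ≠ ⊤)
    {A : Set Z} (hA : MeasurableSet A) : ν (f '' A) = μ A := by
  refine le_antisymm (hle A) ?_
  have hcompl_fin : μ Aᶜ ≠ ⊤ := measure_ne_top_of_subset (subset_univ _) (huniv ▸ hfin)
  have hcover : f '' A ∪ f '' Aᶜ = univ := by
    rw [← image_union, union_compl_self, image_univ_of_surjective hf]
  refine (ENNReal.add_le_add_iff_right hcompl_fin).mp ?_
  calc μ A + μ Aᶜ = ν univ := by rw [measure_add_measure_compl hA, huniv]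
    _ = ν (f '' A ∪ f '' Aᶜ) := by rw [hcover]
    _ ≤ ν (f '' A) + ν (f '' Aᶜ) := measure_union_le _ _
    _ ≤ ν (f '' A) + μ Aᶜ := add_le_add_right (hle Aᶜ) _

theorem measure_preimage_eq_of_surjective_of_measure_image_le (hf : f.Surjective)
    (hmeas : Measurable f) (hle : ∀ s, ν (f '' s) ≤ μ s) (huniv : μ univ = ν univ)
    (hfin : ν univ ≠ ⊤) {B : Set X} (hB : MeasurableSet B) : μ (f ⁻¹' B) = ν B := by
  rw [← measure_image_eq_of_surjective_of_measure_image_le hf hle huniv hfin (hmeas hB),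
    image_preimage_eq B hf]

end MeasureImage

/-- Lemma 1.1: a volume-preserving distance non-increasing surjection between
metric spaces preserves the Hausdorff measure of measurable sets and of their
preimages. -/
theorem volume_preserving_of_lipschitz_surjective
    {Z X : Type*} [MetricSpace Z] [MeasurableSpace Z] [BorelSpace Z]
    [MetricSpace X] [MeasurableSpace X] [BorelSpace X]
    (n : ℕ) (f : Z → X) (hsurj : Function.Surjective f)
    (hlip : ∀ a b : Z, dist (f a) (f b) ≤ dist a b)
    (heq : μH[(n : ℝ)] (Set.univ : Set Z) = μH[(n : ℝ)] (Set.univ : Set X))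
    (hfin : μH[(n : ℝ)] (Set.univ : Set X) < ⊤) :
    (∀ A : Set Z, MeasurableSet A → μH[(n : ℝ)] (f '' A) = μH[(n : ℝ)] A) ∧
    (∀ B : Set X, MeasurableSet B → μH[(n : ℝ)] (f ⁻¹' B) = μH[(n : ℝ)] B) := by
  have hL : LipschitzWith 1 f := .mk_one hlip
  have himage (s : Set Z) : μH[(n : ℝ)] (f '' s) ≤ μH[(n : ℝ)] s := by
    simpa using hL.hausdorffMeasure_image_le (Nat.cast_nonneg n) s
  exact ⟨fun A hA ↦ measure_image_eq_of_surjective_of_measure_image_le hsurj himage heq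
      hfin.ne hA,
    fun B hB ↦ measure_preimage_eq_of_surjective_of_measure_image_le hsurj
      hL.continuous.measurable himage heq hfin.ne hB⟩
end

section
/- Let n ≥ 1 be an integer, ε > 0, and let x, y ∈ ℝⁿ satisfy 0 < ‖x − y‖ ≤ 2ε. Set θ = arccos(‖x − y‖/(2ε)). Then the Lebesgue measure of B_ε(x) ∪ B_ε(y) equals V_n(ε) + 2ε · V_{n-1}(ε) · ∫_{θ}^{π/2} sinⁿ t dt, where V_n(ε) and V_{n-1}(ε) denote the Lebesgue measures of the closed balls of radius ε in ℝⁿ and ℝ^{n-1} respectively, and B_ε(x) denotes the closed ball of radius ε around x. -/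
/-!
Move the centres to `0` and `d • e₀`, where `d = ‖x - y‖`, by an isometry, and slice along the
first coordinate. Writing `S t` for the slice of `B(0, ε)` at height `t`, the slice of the union
at height `s` is the larger of `S s` and `S (s - d)`, so its volume is symmetric about `d / 2`.
Hence the union has volume `2 ∫_{s ≤ d/2} |S s|`, which exceeds `|B(0, ε)| = 2 ∫_{s ≤ 0} |S s|`
by `2 ∫_0^{d/2} V_{n-1}(√(ε² - s²)) ds`; the substitution `s = ε cos t` turns this into the
integral of `sinⁿ`.
-/

open MeasureTheory Real Set Metric
open scoped ENNReal

theorem lintegral_eq_two_mul_setLIntegral_Iic_of_symm {f : ℝ → ℝ≥0∞} {a : ℝ}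
    (hf : ∀ s, f (a - s) = f s) : ∫⁻ s, f s = 2 * ∫⁻ s in Iic (a / 2), f s := by
  have hreflect : ∫⁻ s in Ioi (a / 2), f s = ∫⁻ s in Iic (a / 2), f s := by
    have hpre : (fun s => a - s) ⁻¹' Ioi (a / 2) = Iio (a / 2) := by
      ext s
      simp only [mem_preimage, mem_Ioi, mem_Iio]
      constructor <;> intro h <;> linarith
    rw [← setLIntegral_congr Iio_ae_eq_Iic, ← hpre,
      ← (Measure.measurePreserving_sub_left volume a).setLIntegral_comp_preimage_emb
        (measurableEmbedding_subLeft a)]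
    simp only [hf]
  rw [← lintegral_add_compl f measurableSet_Iic, compl_Iic, hreflect, two_mul]

theorem integral_sqrt_sq_sub_sq_pow {ε a : ℝ} (hε : 0 < ε) (ha : 0 ≤ a) (haε : a ≤ ε) (m : ℕ) :
    ∫ s in (0)..a, √(ε ^ 2 - s ^ 2) ^ m =
      ε ^ (m + 1) * ∫ t in arccos (a / ε)..(π / 2), sin t ^ (m + 1) := by
  set θ := arccos (a / ε)
  have hθ : θ ∈ Icc 0 (π / 2) := ⟨arccos_nonneg _, arccos_le_pi_div_two.mpr (by positivity)⟩
  have hcos : ε * cos θ = a := by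
    rw [cos_arccos (by linarith [div_nonneg ha hε.le]) ((div_le_one hε).mpr haε)]
    field_simp
  have hsubst := intervalIntegral.integral_comp_mul_deriv (a := π / 2) (b := θ)
    (f := fun t => ε * cos t) (f' := fun t => -(ε * sin t))
    (g := fun s => √(ε ^ 2 - s ^ 2) ^ m)
    (fun t _ => by simpa using (hasDerivAt_cos t).const_mul ε) (by fun_prop) (by fun_prop)
  simp only [cos_pi_div_two, mul_zero, hcos] at hsubst
  rw [← hsubst, intervalIntegral.integral_symm, ← intervalIntegral.integral_neg,
    ← intervalIntegral.integral_const_mul]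
  refine intervalIntegral.integral_congr fun t ht => ?_
  rw [uIcc_of_le hθ.2] at ht
  have hsin : 0 ≤ sin t :=
    sin_nonneg_of_nonneg_of_le_pi (hθ.1.trans ht.1) (by linarith [ht.2, pi_pos])
  have hsqrt : √(ε ^ 2 - (ε * cos t) ^ 2) = ε * sin t := by
    rw [← sqrt_sq (by positivity : 0 ≤ ε * sin t)]
    congr 1
    linear_combination (-ε ^ 2) * sin_sq_add_cos_sq t
  simp only [Function.comp_apply, hsqrt]
  ring

theorem volume_closedBall_union_closedBall_congr {E : Type*} [NormedAddCommGroup E]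
    [InnerProductSpace ℝ E] [FiniteDimensional ℝ E] [MeasurableSpace E] [BorelSpace E]
    {x y x' y' : E} (h : dist x y = dist x' y') (ε : ℝ) :
    volume (closedBall x ε ∪ closedBall y ε) = volume (closedBall x' ε ∪ closedBall y' ε) := by
  obtain ⟨R, hR⟩ : ∃ R : E ≃ₗᵢ[ℝ] E, R (x - y) = x' - y' :=
    ⟨_, Submodule.reflection_sub (by rwa [← dist_eq_norm, ← dist_eq_norm])⟩
  set f : E → E := fun z => R (z - y) + y'
  have hf : MeasurePreserving f :=
    (measurePreserving_add_right volume y').comp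
      (R.measurePreserving.comp (measurePreserving_sub_right volume y))
  have hf_isom : Isometry f :=
    (IsometryEquiv.addRight y').isometry.comp
      (R.isometry.comp (IsometryEquiv.subRight y).isometry)
  have hfx : f x = x' := by simp only [f, hR, sub_add_cancel]
  have hfy : f y = y' := by simp only [f, sub_self, map_zero, zero_add]
  calc volume (closedBall x ε ∪ closedBall y ε)
      = volume (f ⁻¹' (closedBall (f x) ε ∪ closedBall (f y) ε)) := by
        rw [preimage_union, hf_isom.preimage_closedBall, hf_isom.preimage_closedBall]
    _ = volume (closedBall x' ε ∪ closedBall y' ε) := by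
        rw [hf.measure_preimage
          (measurableSet_closedBall.union measurableSet_closedBall).nullMeasurableSet, hfx, hfy]

namespace EuclideanSpace

variable {m : ℕ}

def cons (s : ℝ) (w : EuclideanSpace ℝ (Fin m)) : EuclideanSpace ℝ (Fin (m + 1)) :=
  WithLp.toLp 2 (Fin.cons s (WithLp.ofLp w))

theorem norm_cons_sq (s : ℝ) (w : EuclideanSpace ℝ (Fin m)) :
    ‖cons s w‖ ^ 2 = s ^ 2 + ‖w‖ ^ 2 := by
  simp [cons, EuclideanSpace.norm_sq_eq, Fin.sum_univ_succ]

theorem norm_cons_zero (s : ℝ) : ‖cons s (0 : EuclideanSpace ℝ (Fin m))‖ = |s| := by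
  rw [← sqrt_sq (norm_nonneg _), norm_cons_sq, norm_zero, zero_pow two_ne_zero, add_zero,
    sqrt_sq_eq_abs]

theorem norm_cons_le_norm_cons {s t : ℝ} (h : s ^ 2 ≤ t ^ 2) (w : EuclideanSpace ℝ (Fin m)) :
    ‖cons s w‖ ≤ ‖cons t w‖ := by
  rw [← pow_le_pow_iff_left₀ (norm_nonneg _) (norm_nonneg _) two_ne_zero, norm_cons_sq,
    norm_cons_sq]
  linarith

theorem cons_sub_cons (s t : ℝ) (v w : EuclideanSpace ℝ (Fin m)) :
    cons s v - cons t w = cons (s - t) (v - w) := by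
  ext i
  refine Fin.cases ?_ (fun j => ?_) i <;> simp [cons]

theorem measurePreserving_cons :
    MeasurePreserving (fun p : ℝ × EuclideanSpace ℝ (Fin m) => cons p.1 p.2) := by
  have h := (PiLp.volume_preserving_toLp (Fin (m + 1))).comp
    ((volume_preserving_piFinSuccAbove (fun _ : Fin (m + 1) => ℝ) 0).symm.comp
      ((MeasurePreserving.id volume).prod (PiLp.volume_preserving_ofLp (Fin m))))
  rw [Measure.volume_eq_prod]
  convert h using 1
  ext p i
  simp [cons]

theorem volume_eq_lintegral_volume_preimage_cons {S : Set (EuclideanSpace ℝ (Fin (m + 1)))}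
    (hS : MeasurableSet S) : volume S = ∫⁻ s, volume (cons s ⁻¹' S) := by
  rw [← measurePreserving_cons.measure_preimage hS.nullMeasurableSet, Measure.volume_eq_prod,
    Measure.prod_apply (hS.preimage measurePreserving_cons.measurable)]
  rfl

theorem preimage_cons_closedBall_cons (a s ε : ℝ) :
    cons s ⁻¹' closedBall (cons a (0 : EuclideanSpace ℝ (Fin m))) ε =
      cons (s - a) ⁻¹' closedBall 0 ε := by
  ext w
  simp only [mem_preimage, mem_closedBall, dist_eq_norm, cons_sub_cons, sub_zero]

theorem preimage_cons_closedBall_zero_subset {s t : ℝ} (h : s ^ 2 ≤ t ^ 2) (ε : ℝ) :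
    cons t ⁻¹' closedBall (0 : EuclideanSpace ℝ (Fin (m + 1))) ε ⊆
      cons s ⁻¹' closedBall 0 ε := fun w hw => by
  simp only [mem_preimage, mem_closedBall_zero_iff] at hw ⊢
  exact (norm_cons_le_norm_cons h w).trans hw

theorem preimage_cons_neg_closedBall_zero (s ε : ℝ) :
    cons (-s) ⁻¹' closedBall (0 : EuclideanSpace ℝ (Fin (m + 1))) ε =
      cons s ⁻¹' closedBall 0 ε :=
  (preimage_cons_closedBall_zero_subset (neg_sq s).ge ε).antisymm
    (preimage_cons_closedBall_zero_subset (neg_sq s).le ε)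

theorem preimage_cons_closedBall_zero {s ε : ℝ} (hε : 0 ≤ ε) (hs : s ^ 2 ≤ ε ^ 2) :
    cons s ⁻¹' closedBall (0 : EuclideanSpace ℝ (Fin (m + 1))) ε =
      closedBall 0 √(ε ^ 2 - s ^ 2) := by
  ext w
  rw [mem_preimage, mem_closedBall_zero_iff, mem_closedBall_zero_iff,
    ← pow_le_pow_iff_left₀ (norm_nonneg _) hε two_ne_zero, norm_cons_sq,
    le_sqrt (norm_nonneg _) (by linarith)]
  constructor <;> intro h <;> linarith

theorem volume_preimage_cons_closedBall_zero {s ε : ℝ} (hε : 0 ≤ ε) (hs : s ^ 2 ≤ ε ^ 2) :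
    volume (cons s ⁻¹' closedBall (0 : EuclideanSpace ℝ (Fin (m + 1))) ε) =
      ENNReal.ofReal (√(ε ^ 2 - s ^ 2) ^ m) *
        volume (closedBall (0 : EuclideanSpace ℝ (Fin m)) 1) := by
  rw [preimage_cons_closedBall_zero hε hs, Measure.addHaar_closedBall' _ _ (sqrt_nonneg _),
    finrank_euclideanSpace_fin]

theorem setLIntegral_Ioc_volume_preimage_cons_closedBall_zero {a ε : ℝ} (ha : 0 ≤ a)
    (haε : a ≤ ε) :
    ∫⁻ s in Ioc 0 a, volume (cons s ⁻¹' closedBall (0 : EuclideanSpace ℝ (Fin (m + 1))) ε) =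
      ENNReal.ofReal (∫ s in (0)..a, √(ε ^ 2 - s ^ 2) ^ m) *
        volume (closedBall (0 : EuclideanSpace ℝ (Fin m)) 1) := by
  rw [setLIntegral_congr_fun measurableSet_Ioc fun s hs =>
      volume_preimage_cons_closedBall_zero (ha.trans haε) (by nlinarith [hs.1, hs.2]),
    lintegral_mul_const _ (by fun_prop), intervalIntegral.integral_of_le ha,
    ofReal_integral_eq_lintegral_ofReal (by fun_prop : Continuous _).integrableOn_Ioc
      (ae_of_all _ fun s => by positivity)]

theorem volume_closedBall_zero_eq_two_mul_setLIntegral (ε : ℝ) :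
    volume (closedBall (0 : EuclideanSpace ℝ (Fin (m + 1))) ε) =
      2 * ∫⁻ s in Iic 0, volume (cons s ⁻¹' closedBall (0 : EuclideanSpace ℝ (Fin (m + 1))) ε) := by
  rw [volume_eq_lintegral_volume_preimage_cons measurableSet_closedBall,
    lintegral_eq_two_mul_setLIntegral_Iic_of_symm (a := 0) fun s => by
      rw [zero_sub, preimage_cons_neg_closedBall_zero], zero_div]

theorem volume_closedBall_union_closedBall_cons_eq_two_mul_setLIntegral {d : ℝ} (hd : 0 ≤ d)
    (ε : ℝ) :
    volume (closedBall (0 : EuclideanSpace ℝ (Fin (m + 1))) ε ∪ closedBall (cons d 0) ε) =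
      2 * ∫⁻ s in Iic (d / 2),
        volume (cons s ⁻¹' closedBall (0 : EuclideanSpace ℝ (Fin (m + 1))) ε) := by
  set S : ℝ → Set (EuclideanSpace ℝ (Fin m)) := fun t => cons t ⁻¹' closedBall 0 ε
  have hslice (s : ℝ) :
      cons s ⁻¹' (closedBall 0 ε ∪ closedBall (cons d 0) ε) = S s ∪ S (s - d) := by
    rw [preimage_union, preimage_cons_closedBall_cons]
  have hsymm (s : ℝ) : volume (S (d - s) ∪ S (d - s - d)) = volume (S s ∪ S (s - d)) := by
    rw [sub_sub_cancel_left, ← neg_sub s d]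
    simp only [S, preimage_cons_neg_closedBall_zero, union_comm]
  rw [volume_eq_lintegral_volume_preimage_cons
      (measurableSet_closedBall.union measurableSet_closedBall)]
  simp only [hslice]
  rw [lintegral_eq_two_mul_setLIntegral_Iic_of_symm hsymm]
  congr 1
  refine setLIntegral_congr_fun measurableSet_Iic fun s hs => ?_
  have hsd : s ^ 2 ≤ (s - d) ^ 2 := by nlinarith [mem_Iic.mp hs]
  rw [union_eq_left.mpr (preimage_cons_closedBall_zero_subset hsd ε)]

theorem volume_closedBall_union_closedBall_cons {d ε : ℝ} (hε : 0 < ε) (hd : 0 ≤ d)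
    (hdε : d ≤ 2 * ε) :
    volume (closedBall (0 : EuclideanSpace ℝ (Fin (m + 1))) ε ∪ closedBall (cons d 0) ε) =
      volume (closedBall (0 : EuclideanSpace ℝ (Fin (m + 1))) ε) +
        ENNReal.ofReal (2 * ε * ∫ t in arccos (d / (2 * ε))..(π / 2), sin t ^ (m + 1)) *
          volume (closedBall (0 : EuclideanSpace ℝ (Fin m)) ε) := by
  rw [volume_closedBall_union_closedBall_cons_eq_two_mul_setLIntegral hd,
    volume_closedBall_zero_eq_two_mul_setLIntegral,
    ← Iic_union_Ioc_eq_Iic (by positivity : (0 : ℝ) ≤ d / 2),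
    lintegral_union measurableSet_Ioc (Iic_disjoint_Ioc le_rfl), mul_add,
    setLIntegral_Ioc_volume_preimage_cons_closedBall_zero (by positivity) (by linarith),
    integral_sqrt_sq_sub_sq_pow hε (by positivity) (by linarith), div_div,
    Measure.addHaar_closedBall' _ _ hε.le, finrank_euclideanSpace_fin]
  congr 1
  set I := ∫ t in arccos (d / (2 * ε))..(π / 2), sin t ^ (m + 1)
  have hcoeff : ENNReal.ofReal (2 * ε * I) * ENNReal.ofReal (ε ^ m) =
      2 * ENNReal.ofReal (ε ^ (m + 1) * I) := by
    rw [mul_comm, ← ENNReal.ofReal_mul (by positivity), ← ENNReal.ofReal_ofNat 2,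
      ← ENNReal.ofReal_mul zero_le_two]
    ring_nf
  rw [← mul_assoc, ← hcoeff, mul_assoc]

end EuclideanSpace

theorem volume_union_two_balls_general (n : ℕ) (hn : 1 ≤ n) (ε : ℝ) (hε : 0 < ε)
    (x y : EuclideanSpace ℝ (Fin n)) (hxy : ‖x - y‖ ≤ 2 * ε) :
    volume (Metric.closedBall x ε ∪ Metric.closedBall y ε) =
      volume (Metric.closedBall x ε) +
        ENNReal.ofReal
            (2 * ε * ∫ t in Real.arccos (‖x - y‖ / (2 * ε))..(π / 2), Real.sin t ^ n) *
          volume (Metric.closedBall (0 : EuclideanSpace ℝ (Fin (n - 1))) ε) := by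
  obtain ⟨m, rfl⟩ : ∃ m, n = m + 1 := ⟨n - 1, by omega⟩
  have hdist :
      dist x y = dist 0 (EuclideanSpace.cons ‖x - y‖ (0 : EuclideanSpace ℝ (Fin m))) := by
    rw [dist_eq_norm, dist_comm, dist_zero_right, EuclideanSpace.norm_cons_zero, abs_norm]
  rw [volume_closedBall_union_closedBall_congr hdist, Measure.addHaar_closedBall_center volume x]
  exact EuclideanSpace.volume_closedBall_union_closedBall_cons hε (norm_nonneg _) hxy

/-- The Euclidean model case of the ε-ball-tube volume formula (Lemma 1.4):
the volume of the union of two overlapping ε-balls. -/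
theorem volume_union_two_balls (n : ℕ) (hn : 1 ≤ n) (ε : ℝ) (hε : 0 < ε)
    (x y : EuclideanSpace ℝ (Fin n)) (hxy0 : 0 < ‖x - y‖) (hxy : ‖x - y‖ ≤ 2 * ε) :
    volume (Metric.closedBall x ε ∪ Metric.closedBall y ε) =
      volume (Metric.closedBall x ε) +
        ENNReal.ofReal
            (2 * ε * ∫ t in Real.arccos (‖x - y‖ / (2 * ε))..(π / 2), Real.sin t ^ n) *
          volume (Metric.closedBall (0 : EuclideanSpace ℝ (Fin (n - 1))) ε) :=
  volume_union_two_balls_general n hn ε hε x y hxy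
end

section
/- For every integer n ≥ 1, every ε > 0, and every s with 0 ≤ s ≤ ε, one has |∫_{arccos(s/(2ε))}^{π/2} sinⁿ t dt − s/(2ε)| ≤ n · s³/ε³. -/
open Real

set_option maxHeartbeats 1000000 in
/-- Taylor estimate for g(s) = ∫_{arccos(s/(2ε))}^{π/2} sinⁿ t dt (Lemma 1.4). -/
theorem integral_sin_pow_arccos_estimate (n : ℕ) (hn : 1 ≤ n) (ε s : ℝ)
    (hε : 0 < ε) (hs0 : 0 ≤ s) (hsε : s ≤ ε) :
    |(∫ t in Real.arccos (s / (2 * ε))..(π / 2), Real.sin t ^ n) - s / (2 * ε)| ≤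
      n * s ^ 3 / ε ^ 3 := by
  rcases hs0.eq_or_lt with rfl | hs
  · simp [Real.arccos_zero]
  set x := s / (2 * ε) with hxdef
  have hxpos : 0 < x := by positivity
  have hx0 : 0 ≤ x := hxpos.le
  have hx2 : x ≤ 1 / 2 := by
    rw [hxdef, div_le_div_iff₀ (by positivity) (by norm_num)]; linarith
  have hx1 : x ≤ 1 := by linarith
  have hn' : (1 : ℝ) ≤ (n : ℝ) := by exact_mod_cast hn
  have hθ0 : 0 ≤ Real.arccos x := Real.arccos_nonneg x
  have hθle : Real.arccos x ≤ π / 2 := Real.arccos_le_pi_div_two.2 hx0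
  have hlen : π / 2 - Real.arccos x = Real.arcsin x := by
    rw [Real.arccos]; ring
  set c := Real.sqrt (1 - x ^ 2) with hcdef
  have hc : Real.sin (Real.arccos x) = c := Real.sin_arccos x
  have hc0 : 0 ≤ c := Real.sqrt_nonneg _
  have hcsq : c ^ 2 = 1 - x ^ 2 := Real.sq_sqrt (by nlinarith)
  have hc1 : c ≤ 1 := by nlinarith
  have hcge : 1 - x ^ 2 ≤ c := by nlinarith
  -- arcsin bounds
  have harc_lb : x ≤ Real.arcsin x := by
    have h := Real.sin_le (Real.arcsin_nonneg.2 hx0)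
    rwa [Real.sin_arcsin (by linarith) hx1] at h
  have harc_ub : Real.arcsin x ≤ x + x ^ 3 := by
    have hpos : 0 < Real.arcsin x := Real.arcsin_pos.2 hxpos
    have hlt : Real.arcsin x < π / 2 := Real.arcsin_lt_pi_div_two.2 (by linarith)
    have htan := Real.lt_tan hpos hlt
    rw [Real.tan_arcsin] at htan
    have hcpos : 0 < c := by nlinarith
    -- x / c ≤ x + x^3  since  c * (1 + x^2) ≥ 1
    have hx2sq : x ^ 2 ≤ 1 / 4 := by nlinarith
    have h4 : x ^ 4 ≤ x ^ 2 / 4 := by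
      nlinarith [mul_le_mul_of_nonneg_left hx2sq (sq_nonneg x)]
    have h44 : x ^ 2 * x ^ 2 ≤ 1 / 16 := by nlinarith [sq_nonneg x]
    have h6 : x ^ 6 ≤ x ^ 2 / 16 := by
      nlinarith [mul_le_mul_of_nonneg_left h44 (sq_nonneg x)]
    have hone : 1 ≤ c * (1 + x ^ 2) := by
      nlinarith [sq_nonneg (c * (1 + x ^ 2) - 1), sq_nonneg x]
    have hkey : x ≤ c * (x + x ^ 3) := by nlinarith [mul_le_mul_of_nonneg_left hone hx0]
    have : x / c ≤ x + x ^ 3 := by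
      rw [div_le_iff₀ hcpos]; nlinarith
    exact le_of_lt (lt_of_lt_of_le htan this)
  -- integrability
  have hint : IntervalIntegrable (fun t => Real.sin t ^ n) MeasureTheory.volume
      (Real.arccos x) (π / 2) :=
    (Real.continuous_sin.pow n).intervalIntegrable _ _
  -- upper bound on the integral
  have hub : (∫ t in Real.arccos x..(π / 2), Real.sin t ^ n) ≤ Real.arcsin x := by
    have hmono : ∀ t ∈ Set.Icc (Real.arccos x) (π / 2),
        (fun t => Real.sin t ^ n) t ≤ (fun _ => (1 : ℝ)) t := by
      intro t ht
      have h0 : 0 ≤ Real.sin t :=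
        Real.sin_nonneg_of_nonneg_of_le_pi (le_trans hθ0 ht.1)
          (by linarith [ht.2, Real.pi_pos])
      calc Real.sin t ^ n ≤ 1 ^ n := pow_le_pow_left₀ h0 (Real.sin_le_one t) n
        _ = 1 := one_pow n
    have h := intervalIntegral.integral_mono_on hθle hint intervalIntegrable_const hmono
    simpa [hlen] using h
  -- lower bound on the integral
  have hlb : Real.arcsin x * c ^ n ≤ ∫ t in Real.arccos x..(π / 2), Real.sin t ^ n := by
    have hmono : ∀ t ∈ Set.Icc (Real.arccos x) (π / 2),
        (fun _ => c ^ n) t ≤ (fun t => Real.sin t ^ n) t := by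
      intro t ht
      have hst : c ≤ Real.sin t := by
        rw [← hc]
        exact Real.strictMonoOn_sin.monotoneOn
          ⟨by linarith [Real.pi_pos], hθle⟩
          ⟨by linarith [le_trans hθ0 ht.1, Real.pi_pos], ht.2⟩ ht.1
      exact pow_le_pow_left₀ hc0 hst n
    have h := intervalIntegral.integral_mono_on hθle intervalIntegrable_const hint hmono
    simpa [hlen, mul_comm] using h
  -- c^n ≥ 1 - n x^2
  have hcn : 1 - (n : ℝ) * x ^ 2 ≤ c ^ n := by
    have h1 : (1 - x ^ 2) ^ n ≤ c ^ n := pow_le_pow_left₀ (by nlinarith) hcge n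
    have h2 : 1 + (n : ℝ) * (-(x ^ 2)) ≤ (1 + -(x ^ 2)) ^ n :=
      one_add_mul_le_pow (by nlinarith) n
    have : (1 : ℝ) + -(x ^ 2) = 1 - x ^ 2 := by ring
    rw [this] at h2
    linarith
  have hcn0 : 0 ≤ c ^ n := pow_nonneg hc0 n
  -- main estimates
  have hx3 : 0 ≤ x ^ 3 := pow_nonneg hx0 3
  have hx3n : x ^ 3 ≤ (n : ℝ) * x ^ 3 := by nlinarith
  have hI_ub : (∫ t in Real.arccos x..(π / 2), Real.sin t ^ n) - x ≤ (n : ℝ) * x ^ 3 := by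
    linarith
  have hI_lb : x - (∫ t in Real.arccos x..(π / 2), Real.sin t ^ n) ≤ (n : ℝ) * x ^ 3 := by
    have h1 : x * c ^ n ≤ Real.arcsin x * c ^ n := mul_le_mul_of_nonneg_right harc_lb hcn0
    have h2 : x * (1 - (n : ℝ) * x ^ 2) ≤ x * c ^ n := mul_le_mul_of_nonneg_left hcn hx0
    nlinarith
  have htarget : (n : ℝ) * s ^ 3 / ε ^ 3 = 8 * (n : ℝ) * x ^ 3 := by
    rw [hxdef]; field_simp; ring
  rw [htarget, abs_le]
  have h7 : 0 ≤ 7 * (n : ℝ) * x ^ 3 := by positivity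
  constructor <;> [linarith; linarith]
end

section
/- For all real λ ≥ 0 and x with 0 ≤ x ≤ π and λx ≤ π, one has sin(λx) ≥ (1 − (λx)²/6) · λ · sin x. -/
open Real

/-- Lemma 4.6 (3): sin(λx) ≥ (1 − (λx)²/6)·λ·sin x. -/
theorem sin_mul_ge (l x : ℝ) (hl : 0 ≤ l) (hx0 : 0 ≤ x) (hxpi : x ≤ π)
    (hlx : l * x ≤ π) :
    Real.sin (l * x) ≥ (1 - (l * x) ^ 2 / 6) * l * Real.sin x := by
  have hlx0 : 0 ≤ l * x := mul_nonneg hl hx0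
  rcases le_or_gt (1 - (l * x) ^ 2 / 6) 0 with hc | hc
  · calc (1 - (l * x) ^ 2 / 6) * l * sin x
        ≤ 0 := mul_nonpos_of_nonpos_of_nonneg (mul_nonpos_of_nonpos_of_nonneg hc hl)
          (sin_nonneg_of_nonneg_of_le_pi hx0 hxpi)
      _ ≤ sin (l * x) := sin_nonneg_of_nonneg_of_le_pi hlx0 hlx
  · calc (1 - (l * x) ^ 2 / 6) * l * sin x
        ≤ (1 - (l * x) ^ 2 / 6) * l * x := by
          gcongr
          exact sin_le hx0
      _ = l * x - (l * x) ^ 3 / 6 := by ring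
      _ ≤ sin (l * x) := sin_ge_sub_cube hlx0
end

section
/- Let 0 < r < R < π and 0 < δ < (1/2) sin R. Set λ = sin r / sin R and c = 1 − 2δ/(sin R + δ). Then for all s, t ∈ [R − δ, R] and all θ ∈ [0, π], writing s' = r − λ(R − s) and t' = r − λ(R − t), one has c² λ² · (sin²((s − t)/2) + sin²(θ/2) · sin s · sin t) ≤ sin²((s' − t')/2) + sin²(θ/2) · sin s' · sin t' ≤ c⁻² λ² · (sin²((s − t)/2) + sin²(θ/2) · sin s · sin t). -/
open Real Set

/-! By the 1-Lipschitz property of `sin`, for `s ∈ [R - δ, R]` the values `sin s` and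
`sin s' / λ` both lie in `[sin R - δ, sin R + δ]`, so `sin s' / sin s` is within a factor
`c = (sin R - δ) / (sin R + δ)` of `λ`. The half-difference `(s' - t') / 2 = λ (s - t) / 2` is
small, and `w - w³ / 6 ≤ sin w ≤ w` puts `sin (λ v) / sin v` within the same factor of `λ`.
Each term of the half-angle formula therefore scales by `λ²` up to a factor `c^{±2}`. -/

/-- By the half-angle spherical cosine law, this is `sin² (d(x, y) / 2)` for points `x, y` of the
unit sphere at distances `s, t` from a point `p`, making the angle `θ` at `p`. -/
noncomputable def sinSqHalfDist (θ s t : ℝ) : ℝ :=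
  sin ((s - t) / 2) ^ 2 + sin (θ / 2) ^ 2 * sin s * sin t

lemma sin_mem_Icc_of_mem_Icc {a δ x : ℝ} (hx : x ∈ Icc (a - δ) (a + δ)) :
    sin x ∈ Icc (sin a - δ) (sin a + δ) :=
  mem_Icc_iff_abs_le.1 <| (abs_sin_sub_sin_le a x).trans (mem_Icc_iff_abs_le.2 hx)

lemma mul_le_and_le_mul_of_mem_Icc {α β l u v : ℝ} (hα : 0 < α) (hl : 0 ≤ l)
    (hu : u ∈ Icc α β) (hv : v ∈ Icc (l * α) (l * β)) :
    α / β * l * u ≤ v ∧ v ≤ (α / β)⁻¹ * l * u := by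
  have hβ : 0 < β := hα.trans_le (hu.1.trans hu.2)
  constructor
  · calc α / β * l * u ≤ α / β * l * β := by gcongr; exact hu.2
      _ = l * α := by field_simp
      _ ≤ v := hv.1
  · calc v ≤ l * β := hv.2
      _ = (α / β)⁻¹ * l * α := by field_simp
      _ ≤ (α / β)⁻¹ * l * u := by gcongr; exact hu.1

lemma radial_sin_bounds {r R δ l s : ℝ} (hδR : δ < sin R) (hl : 0 ≤ l)
    (hlR : l * sin R = sin r) (hs : s ∈ Icc (R - δ) R) :
    (sin R - δ) / (sin R + δ) * l * sin s ≤ sin (r - l * (R - s)) ∧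
      sin (r - l * (R - s)) ≤ ((sin R - δ) / (sin R + δ))⁻¹ * l * sin s := by
  obtain ⟨hs₁, hs₂⟩ := hs
  have hsR : s ∈ Icc (R - δ) (R + δ) := ⟨hs₁, by linarith⟩
  have hs' : r - l * (R - s) ∈ Icc (r - l * δ) (r + l * δ) := by
    constructor <;> nlinarith
  have hsin' := sin_mem_Icc_of_mem_Icc hs'
  rw [← hlR, ← mul_sub, ← mul_add] at hsin'
  exact mul_le_and_le_mul_of_mem_Icc (by linarith) hl (sin_mem_Icc_of_mem_Icc hsR) hsin'

lemma mul_le_sin {c w : ℝ} (hw : 0 ≤ w) (hc : c ≤ 1 - w ^ 2 / 6) : c * w ≤ sin w :=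
  calc c * w ≤ (1 - w ^ 2 / 6) * w := by gcongr
    _ = w - w ^ 3 / 6 := by ring
    _ ≤ sin w := sin_ge_sub_cube hw

lemma sq_sin_mul_bounds {c l v : ℝ} (hc : 0 < c) (hl : 0 ≤ l) (hv : c ≤ 1 - v ^ 2 / 6)
    (hlv : c ≤ 1 - (l * v) ^ 2 / 6) :
    (c * l) ^ 2 * sin v ^ 2 ≤ sin (l * v) ^ 2 ∧
      sin (l * v) ^ 2 ≤ (c⁻¹ * l) ^ 2 * sin v ^ 2 := by
  wlog hv₀ : 0 ≤ v generalizing v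
  · simpa only [mul_neg, sin_neg, neg_sq] using
      this (v := -v) (by rwa [neg_sq]) (by rwa [mul_neg, neg_sq]) (by linarith)
  have hsv : c * v ≤ sin v := mul_le_sin hv₀ hv
  have hslv : c * (l * v) ≤ sin (l * v) := mul_le_sin (by positivity) hlv
  have hsv₀ : 0 ≤ sin v := (mul_nonneg hc.le hv₀).trans hsv
  have hslv₀ : 0 ≤ sin (l * v) := (mul_nonneg hc.le (mul_nonneg hl hv₀)).trans hslv
  rw [← mul_pow, ← mul_pow]
  constructor
  · refine pow_le_pow_left₀ (mul_nonneg (by positivity) hsv₀) ?_ 2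
    calc c * l * sin v ≤ c * l * v := by gcongr; exact sin_le hv₀
      _ = c * (l * v) := by ring
      _ ≤ sin (l * v) := hslv
  · refine pow_le_pow_left₀ hslv₀ ?_ 2
    calc sin (l * v) ≤ l * v := sin_le (by positivity)
      _ = c⁻¹ * l * (c * v) := by field_simp
      _ ≤ c⁻¹ * l * sin v := by gcongr

lemma div_le_one_sub_sq_div_six {a δ w : ℝ} (ha : 0 < a) (hδ : 0 ≤ δ) (hδa : δ ≤ a)
    (hw : 2 * a * |w| ≤ δ) : (a - δ) / (a + δ) ≤ 1 - w ^ 2 / 6 := by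
  have hw₁ : |w| ≤ 1 / 2 := by nlinarith
  rw [div_le_iff₀ (by linarith), ← sq_abs w]
  nlinarith [abs_nonneg w, mul_le_mul_of_nonneg_left hw (abs_nonneg w)]

lemma sinSqHalfDist_bounds {c l θ s t s' t' : ℝ} (hc : 0 < c) (hl : 0 ≤ l)
    (hs : 0 ≤ sin s) (ht : 0 ≤ sin t)
    (hd : (c * l) ^ 2 * sin ((s - t) / 2) ^ 2 ≤ sin ((s' - t') / 2) ^ 2 ∧
      sin ((s' - t') / 2) ^ 2 ≤ (c⁻¹ * l) ^ 2 * sin ((s - t) / 2) ^ 2)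
    (hss' : c * l * sin s ≤ sin s' ∧ sin s' ≤ c⁻¹ * l * sin s)
    (htt' : c * l * sin t ≤ sin t' ∧ sin t' ≤ c⁻¹ * l * sin t) :
    c ^ 2 * l ^ 2 * sinSqHalfDist θ s t ≤ sinSqHalfDist θ s' t' ∧
      sinSqHalfDist θ s' t' ≤ c⁻¹ ^ 2 * l ^ 2 * sinSqHalfDist θ s t := by
  obtain ⟨hd₁, hd₂⟩ := hd
  obtain ⟨hss'₁, hss'₂⟩ := hss'
  obtain ⟨htt'₁, htt'₂⟩ := htt'
  have hcl : 0 ≤ c * l := by positivity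
  have hs' : 0 ≤ sin s' := (mul_nonneg hcl hs).trans hss'₁
  have ht' : 0 ≤ sin t' := (mul_nonneg hcl ht).trans htt'₁
  unfold sinSqHalfDist
  constructor
  · calc c ^ 2 * l ^ 2 * (sin ((s - t) / 2) ^ 2 + sin (θ / 2) ^ 2 * sin s * sin t)
          = (c * l) ^ 2 * sin ((s - t) / 2) ^ 2
            + sin (θ / 2) ^ 2 * (c * l * sin s) * (c * l * sin t) := by ring
      _ ≤ _ := by gcongr
  · calc sin ((s' - t') / 2) ^ 2 + sin (θ / 2) ^ 2 * sin s' * sin t'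
          ≤ (c⁻¹ * l) ^ 2 * sin ((s - t) / 2) ^ 2
            + sin (θ / 2) ^ 2 * (c⁻¹ * l * sin s) * (c⁻¹ * l * sin t) := by
          gcongr
      _ = _ := by ring

theorem radial_contraction_biLipschitz_sphere_general
    (r R δ lam c : ℝ) (hr : 0 < r) (hrR : r < R) (hRπ : R < π)
    (hδ0 : 0 < δ) (hδ : δ < (1 / 2) * Real.sin R)
    (hlam : lam = Real.sin r / Real.sin R)
    (hc : c = 1 - 2 * δ / (Real.sin R + δ))
    (s t θ : ℝ) (hs : s ∈ Set.Icc (R - δ) R) (ht : t ∈ Set.Icc (R - δ) R) :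
    c ^ 2 * lam ^ 2 *
        (Real.sin ((s - t) / 2) ^ 2 + Real.sin (θ / 2) ^ 2 * Real.sin s * Real.sin t) ≤
      Real.sin (((r - lam * (R - s)) - (r - lam * (R - t))) / 2) ^ 2 +
        Real.sin (θ / 2) ^ 2 * Real.sin (r - lam * (R - s)) * Real.sin (r - lam * (R - t)) ∧
    Real.sin (((r - lam * (R - s)) - (r - lam * (R - t))) / 2) ^ 2 +
        Real.sin (θ / 2) ^ 2 * Real.sin (r - lam * (R - s)) * Real.sin (r - lam * (R - t)) ≤
      c⁻¹ ^ 2 * lam ^ 2 *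
        (Real.sin ((s - t) / 2) ^ 2 + Real.sin (θ / 2) ^ 2 * Real.sin s * Real.sin t) := by
  have hR : 0 < sin R := sin_pos_of_pos_of_lt_pi (hr.trans hrR) hRπ
  have hlam₀ : 0 ≤ lam :=
    hlam ▸ div_nonneg (sin_nonneg_of_nonneg_of_le_pi hr.le (hrR.trans hRπ).le) hR.le
  have hlamR : lam * sin R = sin r := by rw [hlam, div_mul_cancel₀ _ hR.ne']
  obtain rfl : c = (sin R - δ) / (sin R + δ) := by rw [hc]; field_simp; ring
  have hc₀ : 0 < (sin R - δ) / (sin R + δ) := div_pos (by linarith) (by linarith)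
  have hsin : ∀ x ∈ Icc (R - δ) R, 0 ≤ sin x := fun x hx =>
    sin_nonneg_of_nonneg_of_le_pi (by linarith [hx.1, sin_le (hr.trans hrR).le])
      (by linarith [hx.2])
  have hst : |(s - t) / 2| ≤ δ / 2 := by
    rw [abs_le]; constructor <;> linarith [hs.1, hs.2, ht.1, ht.2]
  have hd := sq_sin_mul_bounds hc₀ hlam₀
    (div_le_one_sub_sq_div_six hR hδ0.le (by linarith) (by nlinarith [sin_le_one R]))
    (div_le_one_sub_sq_div_six hR hδ0.le (by linarith) (by
      rw [abs_mul, abs_of_nonneg hlam₀]; nlinarith [sin_le_one r, abs_nonneg ((s - t) / 2)]))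
  rw [show lam * ((s - t) / 2) = ((r - lam * (R - s)) - (r - lam * (R - t))) / 2 by ring] at hd
  exact sinSqHalfDist_bounds hc₀ hlam₀
    (hsin s hs) (hsin t ht) hd (radial_sin_bounds (by linarith) hlam₀ hlamR hs)
    (radial_sin_bounds (by linarith) hlam₀ hlamR ht)

/-- Lemma 4.5, case κ = 1: the radial contraction of the annulus [R−δ, R] onto
[r−λδ, r] is almost bi-Lipschitz with ratio λ = sin r / sin R, measured via sin
of half-distances through the half-angle spherical cosine law. -/
theorem radial_contraction_biLipschitz_sphere
    (r R δ lam c : ℝ) (hr : 0 < r) (hrR : r < R) (hRπ : R < π)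
    (hδ0 : 0 < δ) (hδ : δ < (1 / 2) * Real.sin R)
    (hlam : lam = Real.sin r / Real.sin R)
    (hc : c = 1 - 2 * δ / (Real.sin R + δ))
    (s t θ : ℝ) (hs : s ∈ Set.Icc (R - δ) R) (ht : t ∈ Set.Icc (R - δ) R)
    (hθ : θ ∈ Set.Icc 0 π) :
    c ^ 2 * lam ^ 2 *
        (Real.sin ((s - t) / 2) ^ 2 + Real.sin (θ / 2) ^ 2 * Real.sin s * Real.sin t) ≤
      Real.sin (((r - lam * (R - s)) - (r - lam * (R - t))) / 2) ^ 2 +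
        Real.sin (θ / 2) ^ 2 * Real.sin (r - lam * (R - s)) * Real.sin (r - lam * (R - t)) ∧
    Real.sin (((r - lam * (R - s)) - (r - lam * (R - t))) / 2) ^ 2 +
        Real.sin (θ / 2) ^ 2 * Real.sin (r - lam * (R - s)) * Real.sin (r - lam * (R - t)) ≤
      c⁻¹ ^ 2 * lam ^ 2 *
        (Real.sin ((s - t) / 2) ^ 2 + Real.sin (θ / 2) ^ 2 * Real.sin s * Real.sin t) :=
  radial_contraction_biLipschitz_sphere_general r R δ lam c hr hrR hRπ hδ0 hδ hlam hc s t θ hs ht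
end

section
/- Let 0 < r < R and 0 < δ < R/cosh R. Set λ = sinh r / sinh R and c = 1 − δ · cosh R / R. Then for all s, t ∈ [R − δ, R] and all θ ∈ [0, π], writing s' = r − λ(R − s) and t' = r − λ(R − t), one has c² λ² · (sinh²((s − t)/2) + sin²(θ/2) · sinh s · sinh t) ≤ sinh²((s' − t')/2) + sin²(θ/2) · sinh s' · sinh t' ≤ c⁻² λ² · (sinh²((s − t)/2) + sin²(θ/2) · sinh s · sinh t). -/
open Real

/-!
Compare the two sides term by term, writing `u' = r - λ (R - u)` for the image of a radius `u`.
Differences of radii are scaled exactly by `λ`, and `c λ sinh y ≤ sinh (λ y) ≤ λ sinh y` for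
`|y| ≤ δ`: the upper bound is convexity of `sinh` on `[0, ∞)`, the lower one follows from
`(1 - y) sinh y ≤ y` because `c ≤ 1 - δ`. For the product term, the mean value theorem for `sinh`
gives `sinh R - sinh u ≤ δ cosh R` and `sinh r - sinh u' ≤ λ δ cosh r`, where `sinh r = λ sinh R`;
as `R ≤ sinh R`, both errors are absorbed by the factor `c = 1 - δ cosh R / R`, so that
`c λ sinh u ≤ sinh u' ≤ c⁻¹ λ sinh u`.
-/

namespace Real

theorem sinh_sub_sinh_le_cosh_mul {x y : ℝ} (hxy : |x| ≤ y) :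
    sinh y - sinh x ≤ cosh y * (y - x) := by
  obtain ⟨hx₁, hx₂⟩ := abs_le.mp hxy
  refine (convex_Icc (-y) y).image_sub_le_mul_sub_of_deriv_le continuous_sinh.continuousOn
    differentiable_sinh.differentiableOn (fun z hz => ?_) x ⟨hx₁, hx₂⟩ y
    ⟨by linarith, le_rfl⟩ hx₂
  rw [interior_Icc] at hz
  rw [Real.deriv_sinh, cosh_le_cosh, abs_of_nonneg ((abs_nonneg x).trans hxy)]
  exact abs_le.mpr ⟨hz.1.le, hz.2.le⟩

theorem sinh_le_mul_cosh {x : ℝ} (hx : 0 ≤ x) : sinh x ≤ x * cosh x := by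
  simpa [mul_comm] using sinh_sub_sinh_le_cosh_mul (x := 0) (y := x) (by simpa using hx)

theorem cosh_le_exp {x : ℝ} (hx : 0 ≤ x) : cosh x ≤ exp x := by
  rw [← cosh_add_sinh]
  linarith [sinh_nonneg_iff.mpr hx]

theorem one_sub_mul_sinh_le {x : ℝ} (hx : 0 ≤ x) : (1 - x) * sinh x ≤ x := by
  rcases le_total x 1 with hx1 | hx1
  · have hexp : (1 - x) * exp x ≤ 1 := by
      have := mul_le_mul_of_nonneg_right (one_sub_le_exp_neg x) (exp_pos x).le
      rwa [← exp_add, neg_add_cancel, exp_zero] at this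
    calc (1 - x) * sinh x ≤ (1 - x) * (x * exp x) :=
          mul_le_mul_of_nonneg_left ((sinh_le_mul_cosh hx).trans
            (mul_le_mul_of_nonneg_left (cosh_le_exp hx) hx)) (by linarith)
      _ = x * ((1 - x) * exp x) := by ring
      _ ≤ x := mul_le_of_le_one_right hx hexp
  · nlinarith [sinh_nonneg_iff.mpr hx]

theorem sinh_mul_le_mul_sinh {a x : ℝ} (ha₀ : 0 ≤ a) (ha₁ : a ≤ 1) (hx : 0 ≤ x) :
    sinh (a * x) ≤ a * sinh x := by
  have hmono : MonotoneOn (fun z => a * sinh z - sinh (a * z)) (Set.Ici 0) := by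
    refine monotoneOn_of_hasDerivWithinAt_nonneg (f' := fun z => a * cosh z - cosh (a * z) * a)
      (convex_Ici 0) (by fun_prop) (fun z _ => ?_) (fun z hz => ?_)
    · exact (((hasDerivAt_sinh z).const_mul a).sub
        ((hasDerivAt_sinh (a * z)).comp z ((hasDerivAt_id z).const_mul a) |>.congr_deriv
          (by simp))).hasDerivWithinAt
    · rw [interior_Ici] at hz
      have : cosh (a * z) ≤ cosh z := by
        rw [cosh_le_cosh, abs_mul, abs_of_nonneg ha₀]
        exact mul_le_of_le_one_left (abs_nonneg z) ha₁
      linarith [mul_le_mul_of_nonneg_left this ha₀]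
  simpa using hmono (Set.mem_Ici.mpr le_rfl) (Set.mem_Ici.mpr hx) hx

theorem mul_mul_abs_sinh_le_abs_sinh_mul {c a y : ℝ} (ha : 0 ≤ a) (hc : c ≤ 1 - |y|) :
    c * a * |sinh y| ≤ |sinh (a * y)| := by
  rw [abs_sinh, abs_sinh, abs_mul, abs_of_nonneg ha]
  have hy := abs_nonneg y
  calc c * a * sinh |y| ≤ a * ((1 - |y|) * sinh |y|) := by
        nlinarith [mul_le_mul_of_nonneg_right hc (mul_nonneg ha (sinh_nonneg_iff.mpr hy))]
    _ ≤ a * |y| := mul_le_mul_of_nonneg_left (one_sub_mul_sinh_le hy) ha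
    _ ≤ sinh (a * |y|) := self_le_sinh_iff.mpr (mul_nonneg ha hy)

theorem abs_sinh_mul_le_mul_abs_sinh {a y : ℝ} (ha₀ : 0 ≤ a) (ha₁ : a ≤ 1) :
    |sinh (a * y)| ≤ a * |sinh y| := by
  rw [abs_sinh, abs_sinh, abs_mul, abs_of_nonneg ha₀]
  exact sinh_mul_le_mul_sinh ha₀ ha₁ (abs_nonneg y)

theorem le_of_mul_cosh_le {x y : ℝ} (hx : 0 ≤ x) (h : x * cosh y ≤ y) : x ≤ y :=
  (le_mul_of_one_le_right hx (one_le_cosh y)).trans h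

end Real

noncomputable def contractionRatio (r R : ℝ) : ℝ := sinh r / sinh R

noncomputable def distortionFactor (R δ : ℝ) : ℝ := 1 - δ * cosh R / R

/-- By the half-angle hyperbolic law of cosines, `sinh² (d / 2)` for the distance `d` between
the points with polar coordinates `(s, 0)` and `(t, θ)`. -/
noncomputable def sinhSqHalfDist (s t θ : ℝ) : ℝ :=
  sinh ((s - t) / 2) ^ 2 + sin (θ / 2) ^ 2 * sinh s * sinh t

section Contraction

variable {r R δ u y : ℝ}

theorem contractionRatio_nonneg (hr : 0 ≤ r) (hR : 0 ≤ R) : 0 ≤ contractionRatio r R :=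
  div_nonneg (sinh_nonneg_iff.mpr hr) (sinh_nonneg_iff.mpr hR)

theorem contractionRatio_le_one (hr : 0 ≤ r) (hrR : r ≤ R) : contractionRatio r R ≤ 1 :=
  div_le_one_of_le₀ (sinh_le_sinh.mpr hrR) (sinh_nonneg_iff.mpr (hr.trans hrR))

theorem contractionRatio_mul_sinh (hR : R ≠ 0) : contractionRatio r R * sinh R = sinh r :=
  div_mul_cancel₀ _ (sinh_ne_zero.mpr hR)

theorem contractionRatio_mul_le (hr : 0 ≤ r) (hrR : r ≤ R) (hR : 0 < R) :
    contractionRatio r R * R ≤ r := by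
  have h := sinh_mul_le_mul_sinh (div_nonneg hr hR.le) ((div_le_one hR).mpr hrR) hR.le
  rw [div_mul_cancel₀ r hR.ne'] at h
  rw [contractionRatio, div_mul_eq_mul_div, div_le_iff₀ (sinh_pos_iff.mpr hR)]
  calc sinh r * R ≤ r / R * sinh R * R := by gcongr
    _ = r * sinh R := by field_simp

theorem distortionFactor_nonneg (hR : 0 < R) (hδ : δ * cosh R ≤ R) :
    0 ≤ distortionFactor R δ := by
  rw [distortionFactor, sub_nonneg, div_le_one hR]
  exact hδ

theorem distortionFactor_pos (hR : 0 < R) (hδ : δ * cosh R < R) : 0 < distortionFactor R δ := by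
  rw [distortionFactor, sub_pos, div_lt_one hR]
  exact hδ

theorem distortionFactor_le_one_sub (hR : 0 < R) (hδ : 0 ≤ δ) : distortionFactor R δ ≤ 1 - δ := by
  have hRcosh : R ≤ cosh R := (self_le_sinh_iff.mpr hR.le).trans (sinh_lt_cosh R).le
  have : δ ≤ δ * cosh R / R := by
    rw [le_div_iff₀ hR]
    exact mul_le_mul_of_nonneg_left hRcosh hδ
  rw [distortionFactor]
  linarith

theorem distortionFactor_mul_sinh_le (hR : 0 < R) (hδR : δ ≤ R) (hu : u ∈ Set.Icc (R - δ) R) :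
    distortionFactor R δ * sinh R ≤ sinh u := by
  obtain ⟨hu₁, hu₂⟩ := hu
  have hδ : 0 ≤ δ := by linarith
  have hmvt : sinh R - sinh u ≤ cosh R * (R - u) :=
    sinh_sub_sinh_le_cosh_mul (abs_le.mpr ⟨by linarith, hu₂⟩)
  have hsinhR : 1 ≤ sinh R / R := (one_le_div hR).mpr (self_le_sinh_iff.mpr hR.le)
  calc distortionFactor R δ * sinh R = sinh R - δ * cosh R * (sinh R / R) := by
        rw [distortionFactor]; ring
    _ ≤ sinh R - δ * cosh R * 1 := by gcongr
    _ ≤ sinh R - cosh R * (R - u) := by nlinarith [cosh_pos R]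
    _ ≤ sinh u := by linarith

theorem sub_contractionRatio_mul_mem_Icc (hr : 0 < r) (hrR : r ≤ R) (hδR : δ ≤ R)
    (hu : u ∈ Set.Icc (R - δ) R) : r - contractionRatio r R * (R - u) ∈ Set.Icc 0 r := by
  obtain ⟨hu₁, hu₂⟩ := hu
  have hR : 0 < R := hr.trans_le hrR
  have hlam₀ := contractionRatio_nonneg hr.le hR.le
  have hshift : contractionRatio r R * (R - u) ≤ contractionRatio r R * R :=
    mul_le_mul_of_nonneg_left (by linarith) hlam₀
  have hlamR := contractionRatio_mul_le hr.le hrR hR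
  constructor <;> nlinarith

theorem distortionFactor_mul_contractionRatio_mul_sinh_le (hr : 0 < r) (hrR : r ≤ R)
    (hδ : δ * cosh R ≤ R) (hu : u ∈ Set.Icc (R - δ) R) :
    distortionFactor R δ * contractionRatio r R * sinh u ≤
      sinh (r - contractionRatio r R * (R - u)) := by
  set lam := contractionRatio r R
  have hR : 0 < R := hr.trans_le hrR
  have hδ₀ : 0 ≤ δ := by linarith [hu.1, hu.2]
  have hlam₀ : 0 ≤ lam := contractionRatio_nonneg hr.le hR.le
  have hlamR : lam * sinh R = sinh r := contractionRatio_mul_sinh hR.ne'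
  obtain ⟨hu'₀, -⟩ := sub_contractionRatio_mul_mem_Icc hr hrR (le_of_mul_cosh_le hδ₀ hδ) hu
  have hmvt : sinh r - sinh (r - lam * (R - u)) ≤ cosh r * (lam * (R - u)) := by
    have := sinh_sub_sinh_le_cosh_mul (x := r - lam * (R - u)) (y := r)
      (abs_le.mpr ⟨by linarith, by linarith [mul_nonneg hlam₀ (sub_nonneg.mpr hu.2)]⟩)
    rwa [sub_sub_cancel] at this
  have hcosh : lam * R * cosh r ≤ sinh r * cosh R :=
    calc lam * R * cosh r ≤ lam * sinh R * cosh R := by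
          gcongr
          · exact self_le_sinh_iff.mpr hR.le
          · exact cosh_le_cosh.mpr (abs_le_abs hrR (by linarith))
      _ = sinh r * cosh R := by rw [hlamR]
  have hc₀ : 0 ≤ distortionFactor R δ := distortionFactor_nonneg hR hδ
  calc distortionFactor R δ * lam * sinh u ≤ distortionFactor R δ * sinh r := by
        rw [mul_assoc, ← hlamR]; gcongr; exact sinh_le_sinh.mpr hu.2
    _ = sinh r - δ * (sinh r * cosh R) / R := by rw [distortionFactor]; ring
    _ ≤ sinh r - δ * (lam * R * cosh r) / R := by gcongr
    _ = sinh r - cosh r * (lam * δ) := by field_simp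
    _ ≤ sinh r - cosh r * (lam * (R - u)) := by
        gcongr; linarith [hu.1]
    _ ≤ sinh (r - lam * (R - u)) := by linarith

theorem sinh_sub_contractionRatio_mul_le (hr : 0 < r) (hrR : r ≤ R) (hδ : δ * cosh R < R)
    (hu : u ∈ Set.Icc (R - δ) R) :
    sinh (r - contractionRatio r R * (R - u)) ≤
      (distortionFactor R δ)⁻¹ * contractionRatio r R * sinh u := by
  have hR : 0 < R := hr.trans_le hrR
  have hδR : δ ≤ R := le_of_mul_cosh_le (by linarith [hu.1, hu.2]) hδ.le
  have hc₀ := distortionFactor_pos hR hδ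
  rw [mul_assoc, le_inv_mul_iff₀ hc₀]
  calc distortionFactor R δ * sinh (r - contractionRatio r R * (R - u))
      ≤ distortionFactor R δ * sinh r := by
        gcongr
        exact sinh_le_sinh.mpr (sub_contractionRatio_mul_mem_Icc hr hrR hδR hu).2
    _ = contractionRatio r R * (distortionFactor R δ * sinh R) := by
        rw [← contractionRatio_mul_sinh hR.ne']; ring
    _ ≤ contractionRatio r R * sinh u := by
        gcongr
        · exact contractionRatio_nonneg hr.le hR.le
        · exact distortionFactor_mul_sinh_le hR hδR hu

theorem distortionFactor_mul_contractionRatio_mul_abs_sinh_le (hr : 0 ≤ r) (hR : 0 < R)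
    (hy : |y| ≤ δ) :
    distortionFactor R δ * contractionRatio r R * |sinh y| ≤ |sinh (contractionRatio r R * y)| :=
  mul_mul_abs_sinh_le_abs_sinh_mul (contractionRatio_nonneg hr hR.le)
    ((distortionFactor_le_one_sub hR ((abs_nonneg y).trans hy)).trans (by linarith))

theorem abs_sinh_contractionRatio_mul_le (hr : 0 ≤ r) (hrR : r ≤ R) (hR : 0 < R)
    (hδ : δ * cosh R < R) (hδ₀ : 0 ≤ δ) :
    |sinh (contractionRatio r R * y)| ≤
      (distortionFactor R δ)⁻¹ * contractionRatio r R * |sinh y| := by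
  have hc₀ := distortionFactor_pos hR hδ
  have hc₁ : 1 ≤ (distortionFactor R δ)⁻¹ :=
    (one_le_inv₀ hc₀).mpr ((distortionFactor_le_one_sub hR hδ₀).trans (by linarith))
  have hlam₀ := contractionRatio_nonneg hr hR.le
  calc |sinh (contractionRatio r R * y)| ≤ contractionRatio r R * |sinh y| :=
        abs_sinh_mul_le_mul_abs_sinh hlam₀ (contractionRatio_le_one hr hrR)
    _ ≤ (distortionFactor R δ)⁻¹ * contractionRatio r R * |sinh y| := by
        rw [mul_assoc]
        exact le_mul_of_one_le_left (by positivity) hc₁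

end Contraction

theorem sq_mul_sinhSqHalfDist_le_sq_mul {a b s t s' t' θ : ℝ} (ha : 0 ≤ a)
    (hd : a * |sinh ((s - t) / 2)| ≤ b * |sinh ((s' - t') / 2)|)
    (hs : a * sinh s ≤ b * sinh s') (ht : a * sinh t ≤ b * sinh t')
    (hs₀ : 0 ≤ sinh s) (ht₀ : 0 ≤ sinh t) :
    a ^ 2 * sinhSqHalfDist s t θ ≤ b ^ 2 * sinhSqHalfDist s' t' θ := by
  have hsq : (a * |sinh ((s - t) / 2)|) ^ 2 ≤ (b * |sinh ((s' - t') / 2)|) ^ 2 :=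
    pow_le_pow_left₀ (by positivity) hd 2
  have hprod : (a * sinh s) * (a * sinh t) ≤ (b * sinh s') * (b * sinh t') :=
    mul_le_mul hs ht (by positivity) ((mul_nonneg ha hs₀).trans hs)
  have hS : 0 ≤ sin (θ / 2) ^ 2 := sq_nonneg _
  simp only [sinhSqHalfDist, mul_pow, sq_abs] at hsq ⊢
  nlinarith [mul_le_mul_of_nonneg_left hprod hS]

theorem sq_mul_sinhSqHalfDist_le {k s t s' t' θ : ℝ} (hk : 0 ≤ k)
    (hd : k * |sinh ((s - t) / 2)| ≤ |sinh ((s' - t') / 2)|)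
    (hs : k * sinh s ≤ sinh s') (ht : k * sinh t ≤ sinh t')
    (hs₀ : 0 ≤ sinh s) (ht₀ : 0 ≤ sinh t) :
    k ^ 2 * sinhSqHalfDist s t θ ≤ sinhSqHalfDist s' t' θ := by
  simpa using sq_mul_sinhSqHalfDist_le_sq_mul (b := 1) (θ := θ) hk (by simpa using hd)
    (by simpa using hs) (by simpa using ht) hs₀ ht₀

theorem sinhSqHalfDist_le_sq_mul {K s t s' t' θ : ℝ}
    (hd : |sinh ((s' - t') / 2)| ≤ K * |sinh ((s - t) / 2)|)
    (hs : sinh s' ≤ K * sinh s) (ht : sinh t' ≤ K * sinh t)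
    (hs₀ : 0 ≤ sinh s') (ht₀ : 0 ≤ sinh t') :
    sinhSqHalfDist s' t' θ ≤ K ^ 2 * sinhSqHalfDist s t θ := by
  simpa using sq_mul_sinhSqHalfDist_le_sq_mul (a := 1) (θ := θ) zero_le_one (by simpa using hd)
    (by simpa using hs) (by simpa using ht) hs₀ ht₀

theorem radial_contraction_biLipschitz_hyperbolic_general
    (r R δ lam c : ℝ) (hr : 0 < r) (hrR : r < R)
    (hδ0 : 0 < δ) (hδ : δ < R / Real.cosh R)
    (hlam : lam = Real.sinh r / Real.sinh R)
    (hc : c = 1 - δ * Real.cosh R / R)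
    (s t θ : ℝ) (hs : s ∈ Set.Icc (R - δ) R) (ht : t ∈ Set.Icc (R - δ) R) :
    c ^ 2 * lam ^ 2 *
        (Real.sinh ((s - t) / 2) ^ 2 + Real.sin (θ / 2) ^ 2 * Real.sinh s * Real.sinh t) ≤
      Real.sinh (((r - lam * (R - s)) - (r - lam * (R - t))) / 2) ^ 2 +
        Real.sin (θ / 2) ^ 2 * Real.sinh (r - lam * (R - s)) * Real.sinh (r - lam * (R - t)) ∧
    Real.sinh (((r - lam * (R - s)) - (r - lam * (R - t))) / 2) ^ 2 +
        Real.sin (θ / 2) ^ 2 * Real.sinh (r - lam * (R - s)) * Real.sinh (r - lam * (R - t)) ≤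
      c⁻¹ ^ 2 * lam ^ 2 *
        (Real.sinh ((s - t) / 2) ^ 2 + Real.sin (θ / 2) ^ 2 * Real.sinh s * Real.sinh t) := by
  obtain rfl : lam = contractionRatio r R := hlam
  obtain rfl : c = distortionFactor R δ := hc
  have hR : 0 < R := hr.trans hrR
  have hδcosh : δ * cosh R < R := (lt_div_iff₀ (cosh_pos R)).mp hδ
  have hδR : δ ≤ R := le_of_mul_cosh_le hδ0.le hδcosh.le
  have hsinh₀ (u) (hu : u ∈ Set.Icc (R - δ) R) : 0 ≤ sinh u :=
    sinh_nonneg_iff.mpr (by linarith [hu.1])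
  have hsinh'₀ (u) (hu : u ∈ Set.Icc (R - δ) R) :
      0 ≤ sinh (r - contractionRatio r R * (R - u)) :=
    sinh_nonneg_iff.mpr (sub_contractionRatio_mul_mem_Icc hr hrR.le hδR hu).1
  have harg : ((r - contractionRatio r R * (R - s)) - (r - contractionRatio r R * (R - t))) / 2 =
      contractionRatio r R * ((s - t) / 2) := by ring
  have hst : |(s - t) / 2| ≤ δ :=
    abs_le.mpr ⟨by linarith [hs.1, ht.2], by linarith [hs.2, ht.1]⟩
  rw [← mul_pow, ← mul_pow]
  constructor
  · refine sq_mul_sinhSqHalfDist_le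
      (mul_nonneg (distortionFactor_pos hR hδcosh).le (contractionRatio_nonneg hr.le hR.le)) ?_
      (distortionFactor_mul_contractionRatio_mul_sinh_le hr hrR.le hδcosh.le hs)
      (distortionFactor_mul_contractionRatio_mul_sinh_le hr hrR.le hδcosh.le ht)
      (hsinh₀ s hs) (hsinh₀ t ht)
    rw [harg]
    exact distortionFactor_mul_contractionRatio_mul_abs_sinh_le hr.le hR hst
  · refine sinhSqHalfDist_le_sq_mul (s := s) (t := t) ?_
      (sinh_sub_contractionRatio_mul_le hr hrR.le hδcosh hs)
      (sinh_sub_contractionRatio_mul_le hr hrR.le hδcosh ht) (hsinh'₀ s hs) (hsinh'₀ t ht)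
    rw [harg]
    exact abs_sinh_contractionRatio_mul_le hr.le hrR.le hR hδcosh hδ0.le

/-- Lemma 4.5, case κ = −1: the radial contraction of the annulus [R−δ, R] onto
[r−λδ, r] is almost bi-Lipschitz with ratio λ = sinh r / sinh R, measured via
sinh of half-distances through the half-angle hyperbolic cosine law. -/
theorem radial_contraction_biLipschitz_hyperbolic
    (r R δ lam c : ℝ) (hr : 0 < r) (hrR : r < R)
    (hδ0 : 0 < δ) (hδ : δ < R / Real.cosh R)
    (hlam : lam = Real.sinh r / Real.sinh R)
    (hc : c = 1 - δ * Real.cosh R / R)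
    (s t θ : ℝ) (hs : s ∈ Set.Icc (R - δ) R) (ht : t ∈ Set.Icc (R - δ) R)
    (hθ : θ ∈ Set.Icc 0 π) :
    c ^ 2 * lam ^ 2 *
        (Real.sinh ((s - t) / 2) ^ 2 + Real.sin (θ / 2) ^ 2 * Real.sinh s * Real.sinh t) ≤
      Real.sinh (((r - lam * (R - s)) - (r - lam * (R - t))) / 2) ^ 2 +
        Real.sin (θ / 2) ^ 2 * Real.sinh (r - lam * (R - s)) * Real.sinh (r - lam * (R - t)) ∧
    Real.sinh (((r - lam * (R - s)) - (r - lam * (R - t))) / 2) ^ 2 +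
        Real.sin (θ / 2) ^ 2 * Real.sinh (r - lam * (R - s)) * Real.sinh (r - lam * (R - t)) ≤
      c⁻¹ ^ 2 * lam ^ 2 *
        (Real.sinh ((s - t) / 2) ^ 2 + Real.sin (θ / 2) ^ 2 * Real.sinh s * Real.sinh t) :=
  radial_contraction_biLipschitz_hyperbolic_general r R δ lam c hr hrR hδ0 hδ hlam hc s t θ hs ht
end

section
/- Let X be a metric space, n ≥ 1 an integer, and μ the n-dimensional Hausdorff measure on X. Let V ⊆ X be a subset with dist(x, y) ≤ π for all x, y ∈ V, let c ∈ (0, 1], and let φ : V → X be an injective map such that for all x, y ∈ V, dist(φ(x), φ(y)) ≤ π and sin(dist(φ(x), φ(y))/2) ≥ c · sin(dist(x, y)/2). Then μ(φ(V)) ≥ cⁿ · μ(V). -/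
/-!
For `d = dist x y ≤ π` and `d' = dist (φ x) (φ y)`, the bounds `t cos t ≤ sin t ≤ t` turn the
hypothesis into `c cos (d / 2) d ≤ d'`, and Jordan's inequality gives `d ≤ π d' / (2c)`, so `d → 0`
with `d'`. Hence for every `K > 1/c` the inverse of `φ` is `K`-Lipschitz at small scales. The
Hausdorff measure only sees small scales, so `μH V ≤ Kⁿ μH (φ '' V)`; let `K` decrease to `1/c`.
-/

open MeasureTheory Metric Filter Topology Real
open scoped ENNReal NNReal

namespace Real

theorem mul_cos_le_sin {x : ℝ} (hx₀ : 0 ≤ x) (hx : x ≤ π / 2) : x * cos x ≤ sin x := by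
  rcases hx.lt_or_eq with hx | rfl
  · have hcos : 0 < cos x := cos_pos_of_mem_Ioo ⟨by linarith, hx⟩
    calc x * cos x ≤ tan x * cos x := mul_le_mul_of_nonneg_right (le_tan hx₀ hx) hcos.le
      _ = sin x := tan_mul_cos hcos.ne'
  · simp

theorem le_mul_of_mul_sin_half_le_sin_half {c d d' : ℝ} (hc : 0 < c) (hd : 0 ≤ d) (hdπ : d ≤ π)
    (hd' : 0 ≤ d') (h : c * sin (d / 2) ≤ sin (d' / 2)) : d ≤ π / (2 * c) * d' := by
  have hsin : 2 / π * (d / 2) ≤ sin (d / 2) := mul_le_sin (by linarith) (by linarith)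
  have hd'sin : sin (d' / 2) ≤ d' / 2 := sin_le (by linarith)
  have : c * (d / π) ≤ d' / 2 := by
    calc c * (d / π) = c * (2 / π * (d / 2)) := by ring
      _ ≤ d' / 2 := by nlinarith
  rw [div_mul_eq_mul_div, le_div_iff₀ (by positivity)]
  rw [mul_div_assoc', div_le_iff₀ pi_pos] at this
  linarith

theorem mul_cos_half_mul_le_of_mul_sin_half_le_sin_half {c d d' : ℝ} (hc : 0 < c) (hd : 0 ≤ d)
    (hdπ : d ≤ π) (hd' : 0 ≤ d') (h : c * sin (d / 2) ≤ sin (d' / 2)) :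
    c * cos (d / 2) * d ≤ d' := by
  have hcos : d / 2 * cos (d / 2) ≤ sin (d / 2) := mul_cos_le_sin (by linarith) (by linarith)
  have hd'sin : sin (d' / 2) ≤ d' / 2 := sin_le (by linarith)
  nlinarith

theorem exists_pos_le_mul_of_mul_sin_half_le_sin_half {c K : ℝ} (hc : 0 < c) (hK : c⁻¹ < K) :
    ∃ r > 0, ∀ d d' : ℝ, 0 ≤ d → d ≤ π → 0 ≤ d' → d' ≤ r →
      c * sin (d / 2) ≤ sin (d' / 2) → d ≤ K * d' := by
  have hK₀ : 0 < K := (inv_pos.2 hc).trans hK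
  -- For `d' ≤ r` we get `d / 2 ≤ π r / (4c)`, so choose `r` with `c cos (π r / (4c)) > 1 / K`.
  have hcont : Continuous fun u : ℝ => c * cos (π / (2 * c) * u / 2) := by fun_prop
  have hK' : K⁻¹ < c * cos (π / (2 * c) * 0 / 2) := by simpa using inv_lt_of_inv_lt₀ hc hK
  obtain ⟨r, ⟨hKr, hr2c⟩, hr₀⟩ :=
    (((hcont.tendsto 0).eventually (lt_mem_nhds hK')).and
      (Iio_mem_nhds (by positivity : (0 : ℝ) < 2 * c)) |>.filter_mono nhdsWithin_le_nhds
      |>.and (self_mem_nhdsWithin (s := Set.Ioi 0))).exists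
  refine ⟨r, hr₀, fun d d' hd hdπ hd' hd'r h => ?_⟩
  have hdr : d ≤ π / (2 * c) * r :=
    (le_mul_of_mul_sin_half_le_sin_half hc hd hdπ hd' h).trans (by gcongr)
  have hrπ : π / (2 * c) * r ≤ π := by
    rw [div_mul_eq_mul_div, div_le_iff₀ (by positivity)]
    nlinarith [pi_pos, (hr2c : r < 2 * c)]
  have hcos : cos (π / (2 * c) * r / 2) ≤ cos (d / 2) :=
    cos_le_cos_of_nonneg_of_le_pi (by linarith) (by linarith) (by linarith)
  rw [← inv_mul_le_iff₀ hK₀]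
  calc K⁻¹ * d ≤ c * cos (π / (2 * c) * r / 2) * d := by gcongr
    _ ≤ c * cos (d / 2) * d := by gcongr
    _ ≤ d' := mul_cos_half_mul_le_of_mul_sin_half_le_sin_half hc hd hdπ hd' h

end Real

section

variable {X Y : Type*} [EMetricSpace X] [EMetricSpace Y] {f : X → Y} {s : Set X}

theorem ediam_inter_preimage_le {K : ℝ≥0} {r : ℝ≥0∞}
    (h : ∀ x ∈ s, ∀ y ∈ s, edist (f x) (f y) ≤ r → edist x y ≤ K * edist (f x) (f y))
    {t : Set Y} (ht : ediam t ≤ r) : ediam (s ∩ f ⁻¹' t) ≤ K * ediam t :=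
  ediam_le fun x hx y hy =>
    have hxy := edist_le_ediam_of_mem (s := t) hx.2 hy.2
    (h x hx.1 y hy.1 (hxy.trans ht)).trans (by gcongr)

end

namespace MeasureTheory

variable {X Y : Type*} [EMetricSpace X] [EMetricSpace Y] {f : X → Y} {s : Set X}
  [MeasurableSpace X] [BorelSpace X] [MeasurableSpace Y] [BorelSpace Y] {d : ℝ}

theorem hausdorffMeasure_le_mul_hausdorffMeasure_image {K : ℝ≥0} {r : ℝ≥0∞} (hK : K ≠ 0)
    (hr : 0 < r) (hd : 0 ≤ d)
    (h : ∀ x ∈ s, ∀ y ∈ s, edist (f x) (f y) ≤ r → edist x y ≤ K * edist (f x) (f y)) :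
    μH[d] s ≤ (K : ℝ≥0∞) ^ d * μH[d] (f '' s) := by
  have hKd0 : (K : ℝ≥0∞) ^ d ≠ 0 := by simp [hK]
  have hKd : (K : ℝ≥0∞) ^ d ≠ ∞ := by simp [hd]
  simp only [Measure.hausdorffMeasure_apply, ENNReal.mul_iSup, ENNReal.mul_iInf_of_ne hKd0 hKd,
    ← ENNReal.tsum_mul_left]
  refine iSup₂_le fun ε ε0 => le_iSup₂_of_le (min (ε / K) r) (by simp [ε0.ne', hr]) ?_
  refine le_iInf₂ fun t hst => le_iInf fun htε => ?_
  have hdiam i : ediam (s ∩ f ⁻¹' t i) ≤ K * ediam (t i) :=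
    ediam_inter_preimage_le h ((htε i).trans (min_le_right _ _))
  refine iInf₂_le_of_le (fun i => s ∩ f ⁻¹' t i) ?_ (iInf_le_of_le (fun i => ?_) ?_)
  · intro x hx
    obtain ⟨i, hi⟩ := Set.mem_iUnion.1 (hst (Set.mem_image_of_mem f hx))
    exact Set.mem_iUnion.2 ⟨i, hx, hi⟩
  · exact (hdiam i).trans (ENNReal.mul_le_of_le_div' ((htε i).trans (min_le_left _ _)))
  · refine ENNReal.tsum_le_tsum fun i => iSup_le fun hne => ?_
    simp only [Set.nonempty_of_nonempty_preimage (hne.mono Set.inter_subset_right), ciSup_pos]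
    rw [← ENNReal.mul_rpow_of_nonneg _ _ hd]
    exact ENNReal.rpow_le_rpow (hdiam i) hd

theorem hausdorffMeasure_le_mul_hausdorffMeasure_image_of_forall_gt {K₀ : ℝ≥0} (hK₀ : K₀ ≠ 0)
    (hd : 0 ≤ d) (h : ∀ K > K₀, ∃ r > 0,
      ∀ x ∈ s, ∀ y ∈ s, edist (f x) (f y) ≤ r → edist x y ≤ K * edist (f x) (f y)) :
    μH[d] s ≤ (K₀ : ℝ≥0∞) ^ d * μH[d] (f '' s) := by
  have hlim : Tendsto (fun K : ℝ≥0 => (K : ℝ≥0∞) ^ d * μH[d] (f '' s)) (𝓝[>] K₀)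
      (𝓝 ((K₀ : ℝ≥0∞) ^ d * μH[d] (f '' s))) := by
    refine ENNReal.Tendsto.mul_const ?_ (Or.inl (by simp [hK₀]))
    exact ((ENNReal.continuous_rpow_const.comp ENNReal.continuous_coe).tendsto K₀).mono_left
      nhdsWithin_le_nhds
  refine ge_of_tendsto hlim (eventually_nhdsWithin_of_forall fun K (hK : K₀ < K) => ?_)
  obtain ⟨r, hr, hfK⟩ := h K hK
  exact hausdorffMeasure_le_mul_hausdorffMeasure_image (hK₀.bot_lt.trans hK).ne' hr hd hfK

end MeasureTheory

theorem hausdorff_measure_image_ge_of_sin_expansion_general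
    {X : Type*} [MetricSpace X] [MeasurableSpace X] [BorelSpace X]
    (n : ℕ) (V : Set X)
    (hdiam : ∀ x ∈ V, ∀ y ∈ V, dist x y ≤ π)
    (c : ℝ) (hc0 : 0 < c)
    (φ : X → X)
    (hexp : ∀ x ∈ V, ∀ y ∈ V,
      Real.sin (dist (φ x) (φ y) / 2) ≥ c * Real.sin (dist x y / 2)) :
    μH[(n : ℝ)] (φ '' V) ≥ ENNReal.ofReal (c ^ n) * μH[(n : ℝ)] V := by
  have hle : μH[(n : ℝ)] V ≤ ENNReal.ofReal c⁻¹ ^ (n : ℝ) * μH[(n : ℝ)] (φ '' V) := by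
    refine hausdorffMeasure_le_mul_hausdorffMeasure_image_of_forall_gt (K₀ := c⁻¹.toNNReal)
      (by simpa using hc0) n.cast_nonneg fun K hK => ?_
    obtain ⟨r, hr, hlip⟩ := exists_pos_le_mul_of_mul_sin_half_le_sin_half hc0
      (Real.toNNReal_lt_iff_lt_coe (inv_pos.2 hc0).le |>.1 hK)
    refine ⟨ENNReal.ofReal r, ENNReal.ofReal_pos.2 hr, fun x hx y hy hxy => ?_⟩
    have hdist := hlip _ _ dist_nonneg (hdiam x hx y hy) dist_nonneg
      (edist_le_ofReal hr.le |>.1 hxy) (hexp x hx y hy)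
    rw [edist_dist, edist_dist, ← ENNReal.ofReal_coe_nnreal, ← ENNReal.ofReal_mul K.coe_nonneg]
    exact ENNReal.ofReal_le_ofReal hdist
  have hinv : ENNReal.ofReal (c ^ n) * ENNReal.ofReal c⁻¹ ^ (n : ℝ) = 1 := by
    rw [ENNReal.rpow_natCast, ← ENNReal.ofReal_pow (inv_pos.2 hc0).le,
      ← ENNReal.ofReal_mul (by positivity), ← mul_pow, mul_inv_cancel₀ hc0.ne', one_pow,
      ENNReal.ofReal_one]
  calc ENNReal.ofReal (c ^ n) * μH[(n : ℝ)] V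
      ≤ ENNReal.ofReal (c ^ n) * (ENNReal.ofReal c⁻¹ ^ (n : ℝ) * μH[(n : ℝ)] (φ '' V)) := by
        gcongr
    _ = μH[(n : ℝ)] (φ '' V) := by rw [← mul_assoc, hinv, one_mul]

/-- Lemma 4.4, case κ = 1: an injection on a set of diameter at most π that
expands sin of half-distances by a factor c ∈ (0,1] increases n-dimensional
Hausdorff measure by at least cⁿ. -/
theorem hausdorff_measure_image_ge_of_sin_expansion
    {X : Type*} [MetricSpace X] [MeasurableSpace X] [BorelSpace X]
    (n : ℕ) (hn : 1 ≤ n) (V : Set X)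
    (hdiam : ∀ x ∈ V, ∀ y ∈ V, dist x y ≤ π)
    (c : ℝ) (hc0 : 0 < c) (hc1 : c ≤ 1)
    (φ : X → X) (hinj : Set.InjOn φ V)
    (hdiam' : ∀ x ∈ V, ∀ y ∈ V, dist (φ x) (φ y) ≤ π)
    (hexp : ∀ x ∈ V, ∀ y ∈ V,
      Real.sin (dist (φ x) (φ y) / 2) ≥ c * Real.sin (dist x y / 2)) :
    μH[(n : ℝ)] (φ '' V) ≥ ENNReal.ofReal (c ^ n) * μH[(n : ℝ)] V :=
  hausdorff_measure_image_ge_of_sin_expansion_general n V hdiam c hc0 φ hexp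
end

section
/- Let X be a metric space, n ≥ 1 an integer, and μ the n-dimensional Hausdorff measure on X. Let V ⊆ X be a subset, c ∈ (0, 1], and φ : V → X an injective map such that for all x, y ∈ V, sinh(dist(φ(x), φ(y))/2) ≥ c · sinh(dist(x, y)/2). Then μ(φ(V)) ≥ cⁿ · μ(V). -/
/-!
Since `sinh` is convex on `[0, ∞)` and vanishes at `0`, `sinh (c t) ≤ c sinh t` for `c ∈ [0, 1]`
and `t ≥ 0`. Hence expanding `sinh` of half-distances by `c` expands the distances themselves by
`c`, so `φ` restricted to `V` is antilipschitz with constant `c⁻¹`, and antilipschitz maps decrease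
`d`-dimensional Hausdorff measure by at most the `d`-th power of their constant.
-/

open MeasureTheory Real Set
open scoped NNReal ENNReal

lemma Real.convexOn_sinh : ConvexOn ℝ (Ici 0) sinh :=
  MonotoneOn.convexOn_of_deriv (convex_Ici 0) continuous_sinh.continuousOn
    differentiable_sinh.differentiableOn <| by
      rw [deriv_sinh, interior_Ici]
      exact cosh_strictMonoOn.monotoneOn.mono Ioi_subset_Ici_self

lemma Real.sinh_mul_le {c t : ℝ} (hc0 : 0 ≤ c) (hc1 : c ≤ 1) (ht : 0 ≤ t) :
    sinh (c * t) ≤ c * sinh t := by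
  simpa using convexOn_sinh.2 ht self_mem_Ici hc0 (sub_nonneg.2 hc1) (add_sub_cancel c 1)

lemma Real.mul_le_of_mul_sinh_le {c s t : ℝ} (hc0 : 0 ≤ c) (hc1 : c ≤ 1) (hs : 0 ≤ s)
    (h : c * sinh s ≤ sinh t) : c * s ≤ t :=
  sinh_le_sinh.1 <| (sinh_mul_le hc0 hc1 hs).trans h

theorem rpow_mul_hausdorffMeasure_le_image_of_mul_edist_le {X Y : Type*} [EMetricSpace X]
    [MeasurableSpace X] [BorelSpace X] [EMetricSpace Y] [MeasurableSpace Y] [BorelSpace Y]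
    {K : ℝ≥0} (hK : K ≠ 0) {f : X → Y} {s : Set X}
    (hf : ∀ x ∈ s, ∀ y ∈ s, K * edist x y ≤ edist (f x) (f y)) {d : ℝ} (hd : 0 ≤ d) :
    (K : ℝ≥0∞) ^ d * μH[d] s ≤ μH[d] (f '' s) := by
  have hK' : (K : ℝ≥0∞) ≠ 0 := by exact_mod_cast hK
  have hanti : AntilipschitzWith K⁻¹ (s.domRestrict f) := fun x y => by
    rw [ENNReal.coe_inv hK, ← ENNReal.mul_le_iff_le_inv hK' ENNReal.coe_ne_top]
    exact hf x x.2 y y.2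
  have hs : μH[d] s = μH[d] (univ : Set s) := by
    simpa using (isometry_subtype_coe (s := s)).hausdorffMeasure_image (Or.inl hd) univ
  have key := hanti.le_hausdorffMeasure_image hd univ
  rw [← hs, image_univ, range_domRestrict, ENNReal.coe_inv hK, ENNReal.inv_rpow,
    ← ENNReal.mul_le_iff_le_inv (by positivity) (by finiteness)] at key
  exact key

theorem hausdorff_measure_image_ge_of_sinh_expansion_general
    {X : Type*} [MetricSpace X] [MeasurableSpace X] [BorelSpace X]
    (n : ℕ) (V : Set X)
    (c : ℝ) (hc0 : 0 < c) (hc1 : c ≤ 1)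
    (φ : X → X)
    (hexp : ∀ x ∈ V, ∀ y ∈ V,
      Real.sinh (dist (φ x) (φ y) / 2) ≥ c * Real.sinh (dist x y / 2)) :
    μH[(n : ℝ)] (φ '' V) ≥ ENNReal.ofReal (c ^ n) * μH[(n : ℝ)] V := by
  have hdist : ∀ x ∈ V, ∀ y ∈ V, c * dist x y ≤ dist (φ x) (φ y) := fun x hx y hy => by
    have := mul_le_of_mul_sinh_le hc0.le hc1 (by positivity) (hexp x hx y hy)
    linarith
  have hedist : ∀ x ∈ V, ∀ y ∈ V, ENNReal.ofReal c * edist x y ≤ edist (φ x) (φ y) :=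
    fun x hx y hy => by
      rw [edist_dist, edist_dist, ← ENNReal.ofReal_mul hc0.le]
      exact ENNReal.ofReal_le_ofReal (hdist x hx y hy)
  have key := rpow_mul_hausdorffMeasure_le_image_of_mul_edist_le (K := c.toNNReal)
    (by simpa using hc0) hedist (Nat.cast_nonneg n)
  rw [ENNReal.ofReal_pow hc0.le, ← ENNReal.rpow_natCast]
  exact key

/-- Lemma 4.4, case κ = −1: an injection that expands sinh of half-distances by
a factor c ∈ (0,1] increases n-dimensional Hausdorff measure by at least cⁿ. -/
theorem hausdorff_measure_image_ge_of_sinh_expansion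
    {X : Type*} [MetricSpace X] [MeasurableSpace X] [BorelSpace X]
    (n : ℕ) (hn : 1 ≤ n) (V : Set X)
    (c : ℝ) (hc0 : 0 < c) (hc1 : c ≤ 1)
    (φ : X → X) (hinj : Set.InjOn φ V)
    (hexp : ∀ x ∈ V, ∀ y ∈ V,
      Real.sinh (dist (φ x) (φ y) / 2) ≥ c * Real.sinh (dist x y / 2)) :
    μH[(n : ℝ)] (φ '' V) ≥ ENNReal.ofReal (c ^ n) * μH[(n : ℝ)] V :=
  hausdorff_measure_image_ge_of_sinh_expansion_general n V c hc0 hc1 φ hexp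
end

section
/- Let R > 0 and let f, g : [0, R] → ℝ be strictly increasing functions with f(0) = g(0) = 0 and f(t) > 0, g(t) > 0 for all t ∈ (0, R]. Assume (i) f(t)/g(t) → 1 as t → 0⁺, and (ii) for all 0 ≤ R₁ < R₂ < R₃ ≤ R one has (f(R₃) − f(R₁)) · (g(R₃) − g(R₂)) ≥ (g(R₃) − g(R₁)) · (f(R₃) − f(R₂)). Then there exists r ∈ (0, R) with f(r) · g(R) = g(r) · f(R) if and only if f(R) = g(R). -/
open Filter

/-- Lemma 4.3 (real-analysis content): under Bishop–Gromov type monotonicity,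
equality of ball-volume ratios at some intermediate radius is equivalent to
equality of the volumes at the outer radius. -/
theorem ratio_rigidity (R : ℝ) (hR : 0 < R) (f g : ℝ → ℝ)
    (hf : StrictMonoOn f (Set.Icc 0 R)) (hg : StrictMonoOn g (Set.Icc 0 R))
    (hf0 : f 0 = 0) (hg0 : g 0 = 0)
    (hfpos : ∀ t ∈ Set.Ioc 0 R, 0 < f t) (hgpos : ∀ t ∈ Set.Ioc 0 R, 0 < g t)
    (hlim : Tendsto (fun t => f t / g t) (nhdsWithin 0 (Set.Ioi 0)) (nhds 1))
    (hmono : ∀ R₁ R₂ R₃ : ℝ, 0 ≤ R₁ → R₁ < R₂ → R₂ < R₃ → R₃ ≤ R →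
      (f R₃ - f R₁) * (g R₃ - g R₂) ≥ (g R₃ - g R₁) * (f R₃ - f R₂)) :
    (∃ r ∈ Set.Ioo 0 R, f r * g R = g r * f R) ↔ f R = g R := by
  have hgR : 0 < g R := hgpos R ⟨hR, le_rfl⟩
  have hfR : 0 < f R := hfpos R ⟨hR, le_rfl⟩
  -- ratio is nonincreasing: for 0 < a < b ≤ R, f a / g a ≥ f b / g b
  have step2 : ∀ a b : ℝ, 0 < a → a < b → b ≤ R → g b * f a ≥ f b * g a := by
    intro a b ha hab hbR
    have h := hmono 0 a b le_rfl ha hab hbR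
    rw [hf0, hg0] at h
    nlinarith [h]
  -- f t ≤ g t on (0, R]
  have hle : ∀ t ∈ Set.Ioc 0 R, f t ≤ g t := by
    intro t ht
    have hgt := hgpos t ht
    have hev : ∀ᶠ s in nhdsWithin (0:ℝ) (Set.Ioi 0), f t / g t ≤ f s / g s := by
      filter_upwards [Ioo_mem_nhdsGT_of_mem (Set.mem_Ico.mpr ⟨le_rfl, ht.1⟩)] with s hs
      have hgs := hgpos s ⟨hs.1, (hs.2.trans_le ht.2).le⟩
      rw [div_le_div_iff₀ hgt hgs]
      have := step2 s t hs.1 hs.2 ht.2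
      nlinarith
    have h1 : f t / g t ≤ 1 := ge_of_tendsto hlim hev
    exact (div_le_one hgt).mp h1
  constructor
  · rintro ⟨r, ⟨hr0, hrR⟩, heq⟩
    have hgr := hgpos r ⟨hr0, hrR.le⟩
    have hfr := hfpos r ⟨hr0, hrR.le⟩
    have hgrR : g r < g R := hg ⟨hr0.le, hrR.le⟩ ⟨hR.le, le_rfl⟩ hrR
    have hconst : ∀ t ∈ Set.Ioo (0:ℝ) r, f t * g r = g t * f r := by
      rintro t ⟨ht0, htr⟩
      have hgt := hgpos t ⟨ht0, (htr.trans hrR).le⟩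
      have hA := step2 t r ht0 htr hrR.le
      have hM := hmono t r R ht0.le htr hrR le_rfl
      have hAB : f t * g r - g t * f r ≥ f t * g R - g t * f R := by nlinarith [hM, heq]
      have key : (f t * g R - g t * f R) * g r = (f t * g r - g t * f r) * g R := by
        nlinarith [heq]
      have hA' : f t * g r - g t * f r ≥ 0 := by nlinarith [hA]
      have hB : f t * g r - g t * f r ≤ 0 := by
        nlinarith [mul_le_mul_of_nonneg_right hAB hgr.le, key, hA', hgrR]
      linarith
    have hc : f r / g r = 1 := by
      have h1 : Tendsto (fun t => f t / g t) (nhdsWithin (0:ℝ) (Set.Ioi 0))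
          (nhds (f r / g r)) := by
        refine Tendsto.congr' ?_ tendsto_const_nhds
        filter_upwards [Ioo_mem_nhdsGT_of_mem (Set.mem_Ico.mpr ⟨le_rfl, hr0⟩)] with t ht
        have hgt := hgpos t ⟨ht.1, (ht.2.trans hrR).le⟩
        have := hconst t ht
        field_simp
        linarith [this]
      exact tendsto_nhds_unique h1 hlim
    have hfrgr : f r = g r := by
      field_simp at hc
      linarith
    have : f r * g R = f r * f R := by rw [heq, ← hfrgr]
    exact (mul_left_cancel₀ (ne_of_gt hfr) this).symm
  · intro hRR
    refine ⟨R / 2, ⟨by linarith, by linarith⟩, ?_⟩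
    have ht : (R / 2 : ℝ) ∈ Set.Ioc 0 R := ⟨by linarith, by linarith⟩
    have h1 := hle (R / 2) ht
    have h2 := step2 (R / 2) R (by linarith) (by linarith) le_rfl
    rw [hRR] at h2
    have h3 : f (R / 2) = g (R / 2) := le_antisymm h1 (by nlinarith [h2, hgR])
    rw [h3, hRR]
end

section
/- Let 0 < r < π and 0 < δ < sin r. Define a sequence a : ℕ → ℝ by a₀ = 1 and a_{i+1} = a_i − δ · sin(a_i · r)/(r · sin r). Then for every i one has 0 < a_{i+1} ≤ (1 − δ/r) · a_i; consequently 0 < a_i ≤ (1 − δ/r)^i for all i, and a_i → 0 as i → ∞. -/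
open Real Filter

/-- The partition sequence (4.1.8) with κ = 1: positivity, geometric decay and
convergence to 0. -/
theorem partition_sequence_decay (r δ : ℝ) (hr0 : 0 < r) (hrπ : r < π)
    (hδ0 : 0 < δ) (hδ : δ < Real.sin r)
    (a : ℕ → ℝ) (ha0 : a 0 = 1)
    (harec : ∀ i : ℕ, a (i + 1) = a i - δ * Real.sin (a i * r) / (r * Real.sin r)) :
    (∀ i : ℕ, 0 < a (i + 1) ∧ a (i + 1) ≤ (1 - δ / r) * a i) ∧
    (∀ i : ℕ, 0 < a i ∧ a i ≤ (1 - δ / r) ^ i) ∧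
    Tendsto a atTop (nhds 0) := by
  have hsinr : 0 < Real.sin r := Real.sin_pos_of_pos_of_lt_pi hr0 hrπ
  have hδr : δ / r < 1 := by
    rw [div_lt_one hr0]
    exact hδ.trans (Real.sin_lt hr0)
  have hdr : 0 < δ / r := div_pos hδ0 hr0
  have hq0 : 0 < 1 - δ / r := by linarith
  -- key step
  have key : ∀ i : ℕ, 0 < a i → a i ≤ 1 →
      0 < a (i + 1) ∧ a (i + 1) ≤ (1 - δ / r) * a i := by
    intro i hpos hle
    have har0 : 0 < a i * r := mul_pos hpos hr0
    have harπ : a i * r < π := by nlinarith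
    have hsinpos : 0 < Real.sin (a i * r) := Real.sin_pos_of_pos_of_lt_pi har0 harπ
    have hsinle : Real.sin (a i * r) ≤ a i * r := Real.sin_le har0.le
    -- concavity: sin (a i * r) ≥ a i * sin r
    have hconc : a i * Real.sin r ≤ Real.sin (a i * r) := by
      have := strictConcaveOn_sin_Icc.concaveOn.2
        (Set.mem_Icc.mpr ⟨le_refl 0, Real.pi_pos.le⟩)
        (Set.mem_Icc.mpr ⟨hr0.le, hrπ.le⟩)
        (show (0:ℝ) ≤ 1 - a i by linarith) hpos.le (by ring)
      simpa [smul_eq_mul] using this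
    constructor
    · rw [harec i]
      have h1 : δ * Real.sin (a i * r) < Real.sin r * (a i * r) := by
        nlinarith
      rw [sub_pos, div_lt_iff₀ (by positivity)]
      nlinarith
    · have h2 : δ * (a i * Real.sin r) ≤ δ * Real.sin (a i * r) := by
        nlinarith
      have heq : (1 - δ / r) * a i = a i - δ * (a i * Real.sin r) / (r * Real.sin r) := by
        field_simp
      rw [harec i, heq]
      apply sub_le_sub_left
      rw [div_le_div_iff_of_pos_right (by positivity)]
      exact h2
  -- positivity and upper bound 1, by induction
  have hbound : ∀ i : ℕ, 0 < a i ∧ a i ≤ (1 - δ / r) ^ i := by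
    intro i
    induction i with
    | zero => simp [ha0]
    | succ n ih =>
      have hle1 : a n ≤ 1 := ih.2.trans (by
        calc (1 - δ / r) ^ n ≤ 1 ^ n := by
              apply pow_le_pow_left₀ hq0.le (by linarith)
          _ = 1 := one_pow n)
      obtain ⟨h1, h2⟩ := key n ih.1 hle1
      refine ⟨h1, ?_⟩
      calc a (n + 1) ≤ (1 - δ / r) * a n := h2
        _ ≤ (1 - δ / r) * (1 - δ / r) ^ n := by
            apply mul_le_mul_of_nonneg_left ih.2 hq0.le
        _ = (1 - δ / r) ^ (n + 1) := by ring
  have hfirst : ∀ i : ℕ, 0 < a (i + 1) ∧ a (i + 1) ≤ (1 - δ / r) * a i := by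
    intro i
    refine key i (hbound i).1 ?_
    exact (hbound i).2.trans (by
      calc (1 - δ / r) ^ i ≤ 1 ^ i := pow_le_pow_left₀ hq0.le (by linarith) i
        _ = 1 := one_pow i)
  refine ⟨hfirst, hbound, ?_⟩
  have hlim : Tendsto (fun i : ℕ => (1 - δ / r) ^ i) atTop (nhds 0) :=
    tendsto_pow_atTop_nhds_zero_of_lt_one hq0.le (by linarith)
  exact squeeze_zero (fun i => (hbound i).1.le) (fun i => (hbound i).2) hlim
end
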